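/- The module $\Theta(\lambda, \alpha, \beta, \gamma)$ over the affine-Virasoro algebra of type $A_1$ is irreducible if and only if $2\beta \notin \mathbb{Z}_{\geq 0}$. -/

import Mathlib

open MvPolynomial

/-- `ℂ[s,t]`, with `s = X 0` and `t = X 1`. -/
noncomputable abbrev P2 : Type := MvPolynomial (Fin 2) ℂ

/-- Substitution `g(s,t) ↦ g(s - i, t + a)`. -/
noncomputable def subST (i : ℤ) (a : ℂ) : P2 →ₐ[ℂ] P2 :=
  aeval ![X 0 - C (i : ℂ), X 1 + C a]

/-- Action of `e_i` on `Θ(λ,α,β,γ)`. -/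
noncomputable def thE (lam alp bet : ℂ) (i : ℤ) (g : P2) : P2 :=
  (lam ^ i * alp) • ((C (1/2 : ℂ) * X 1 + C bet) * subST i (-2) g)

/-- Action of `f_i` on `Θ(λ,α,β,γ)`. -/
noncomputable def thF (lam alp bet : ℂ) (i : ℤ) (g : P2) : P2 :=
  (-(lam ^ i / alp)) • ((C (1/2 : ℂ) * X 1 - C bet) * subST i 2 g)

/-- Action of `h_i` on `Θ(λ,α,β,γ)`. -/
noncomputable def thH (lam : ℂ) (i : ℤ) (g : P2) : P2 :=
  lam ^ i • (X 1 * subST i 0 g)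

/-- Action of `d_i` on `Θ(λ,α,β,γ)`. -/
noncomputable def thD (lam gam : ℂ) (i : ℤ) (g : P2) : P2 :=
  lam ^ i • ((X 0 + C ((i : ℂ) * gam)) * subST i 0 g)

/-!
Invariant subspaces are ideals, since `h₀` and `d₀` act as multiplication by `t` and `s`, so a
proper one has a common zero `(a, b)` by the Nullstellensatz. The operator `h_i` moves a common
zero `(a, b)` with `b ≠ 0` to `(a - i, b)`, `e₀` moves it to `(a, b - 2)` unless `b = -2β`, and
`f₀` to `(a, b + 2)` unless `b = 2β`. If `2β ∉ ℤ≥0`, one of the two barriers is never hit by the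
ladder `b + 2k` resp. `b - 2k`, which gives infinitely many rows of zeros, hence an infinite grid,
hence the subspace is zero. If `2β = n`, the ideal generated by `∏_{j=0}^{n} (t/2 + j - β)`, whose
zero set is the union of the lines `t = n, n - 2, …, -n`, is invariant and proper.
-/

namespace MvPolynomial

theorem mul_mem_of_forall_X_mul_mem {σ R : Type*} [CommSemiring R]
    (W : Submodule R (MvPolynomial σ R)) (hX : ∀ j, ∀ g ∈ W, X j * g ∈ W)
    (p : MvPolynomial σ R) {g : MvPolynomial σ R} (hg : g ∈ W) : p * g ∈ W := by
  induction p using MvPolynomial.induction_on generalizing g with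
  | C a => rw [← smul_eq_C_mul]; exact W.smul_mem a hg
  | add p q hp hq => rw [add_mul]; exact W.add_mem (hp hg) (hq hg)
  | mul_X p j hp => rw [mul_assoc]; exact hp (hX j g hg)

theorem exists_forall_eval_eq_zero_of_forall_X_mul_mem {σ K : Type*} [Field K] [IsAlgClosed K]
    [Finite σ] (W : Submodule K (MvPolynomial σ K)) (hX : ∀ j, ∀ g ∈ W, X j * g ∈ W)
    (hW : W ≠ ⊤) : ∃ x : σ → K, ∀ g ∈ W, eval x g = 0 := by
  let I : Ideal (MvPolynomial σ K) :=
    { W with smul_mem' := fun p _ hg => mul_mem_of_forall_X_mul_mem W hX p hg }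
  have hI : I ≠ ⊤ := fun h => hW <| Submodule.eq_top_iff'.mpr fun p => by
    simpa using mul_mem_of_forall_X_mul_mem W hX p ((Ideal.eq_top_iff_one I).mp h)
  obtain ⟨M, hM, hIM⟩ := I.exists_le_maximal hI
  obtain ⟨x, rfl⟩ := isMaximal_iff_eq_vanishingIdeal_singleton.mp hM
  exact ⟨x, fun g hg => (mem_vanishingIdeal_singleton_iff x g).mp (hIM hg)⟩

theorem eq_zero_of_eval_eq_zero_on_grid {K : Type*} [Field K] [CharZero K]
    {g : MvPolynomial (Fin 2) K} {a b d : K} (hd : d ≠ 0)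
    (h : ∀ (i : ℤ) (k : ℕ), b + d * k ≠ 0 → eval ![a - i, b + d * k] g = 0) : g = 0 := by
  refine funext_set ![Set.range fun i : ℤ => a - i, Set.range (fun k : ℕ => b + d * k) \ {0}]
    (fun j => ?_) fun x hx => ?_
  · fin_cases j
    · exact Set.infinite_range_of_injective fun i i' hi => by simpa using hi
    · exact (Set.infinite_range_of_injective fun k k' hk => by simpa [hd] using hk).sdiff
        (Set.finite_singleton 0)
  · obtain ⟨i, hi⟩ := hx 0 trivial
    obtain ⟨⟨k, hk⟩, hk0⟩ := hx 1 trivial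
    have hx_eq : x = ![a - i, b + d * k] := by
      ext j; fin_cases j <;> simp [hi, hk]
    rw [hx_eq, map_zero]
    exact h i k (by simpa [hk] using hk0)

end MvPolynomial

theorem add_mul_natCast_induction {R : Type*} [Semiring R] {P : R → Prop} {b c d : R} (hb : P b)
    (hstep : ∀ y, P y → y ≠ c → P (y + d)) (hc : ∀ k : ℕ, b + d * k ≠ c) (k : ℕ) :
    P (b + d * k) := by
  induction k with
  | zero => simpa using hb
  | succ k ih => simpa [mul_add, add_assoc] using hstep _ ih (hc k)

theorem Ideal.smul_mul_map_mem_span_singleton {R A : Type*} [CommSemiring R] [CommSemiring A]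
    [Algebra R A] (φ : A →ₐ[R] A) (r : R) {m m' q g : A} (hq : m * φ q = m' * q)
    (hg : g ∈ Ideal.span {q}) : r • (m * φ g) ∈ Ideal.span {q} := by
  obtain ⟨c, rfl⟩ := Ideal.mem_span_singleton'.mp hg
  refine Ideal.mem_span_singleton'.mpr ⟨r • (φ c * m'), ?_⟩
  rw [map_mul, mul_left_comm, hq, smul_mul_assoc, mul_assoc]

def IsThetaSubmodule (lam alp bet gam : ℂ) (W : Submodule ℂ P2) : Prop :=
  ∀ i : ℤ, ∀ g ∈ W, thE lam alp bet i g ∈ W ∧ thF lam alp bet i g ∈ W ∧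
    thH lam i g ∈ W ∧ thD lam gam i g ∈ W

theorem eval_subST (x : Fin 2 → ℂ) (i : ℤ) (c : ℂ) (g : P2) :
    eval x (subST i c g) = eval ![x 0 - i, x 1 + c] g := by
  change aeval x (bind₁ _ g) = aeval _ g
  rw [aeval_bind₁]
  congr 1
  ext j; fin_cases j <;> simp

theorem subST_zero_zero : subST 0 0 = AlgHom.id ℂ P2 := by
  ext j; fin_cases j <;> simp [subST]

section Irreducible

variable {lam alp bet gam : ℂ} {W : Submodule ℂ P2}

theorem IsThetaSubmodule.X_mul_mem (hW : IsThetaSubmodule lam alp bet gam W) (j : Fin 2)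
    {g : P2} (hg : g ∈ W) : X j * g ∈ W := by
  fin_cases j
  · simpa [thD, subST_zero_zero] using (hW 0 g hg).2.2.2
  · simpa [thH, subST_zero_zero] using (hW 0 g hg).2.2.1

def VanishesAt (W : Submodule ℂ P2) (a b : ℂ) : Prop :=
  ∀ g ∈ W, eval ![a, b] g = 0

theorem forall_add_two_mul_ne_or_forall_add_neg_two_mul_ne (hbet : ¬∃ n : ℕ, 2 * bet = n)
    (y : ℂ) : (∀ k : ℕ, y + 2 * k ≠ 2 * bet) ∨ ∀ k : ℕ, y + -2 * k ≠ -(2 * bet) := by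
  by_contra! ⟨⟨k, hk⟩, ⟨l, hl⟩⟩
  exact hbet ⟨k + l, by push_cast; linear_combination (hl - hk) / 2⟩

variable {a b : ℂ}

theorem IsThetaSubmodule.vanishesAt_sub_intCast (hW : IsThetaSubmodule lam alp bet gam W)
    (hlam : lam ≠ 0) (h : VanishesAt W a b) (hb : b ≠ 0) (i : ℤ) : VanishesAt W (a - i) b :=
  fun g hg => by
    simpa [thH, eval_subST, smul_eq_C_mul, zpow_ne_zero i hlam, hb] using h _ (hW i g hg).2.2.1

theorem IsThetaSubmodule.vanishesAt_add_neg_two (hW : IsThetaSubmodule lam alp bet gam W)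
    (halp : alp ≠ 0) (h : VanishesAt W a b) (hb : b ≠ -(2 * bet)) :
    VanishesAt W a (b + -2) := fun g hg => by
  have hb' : 2⁻¹ * b + bet ≠ 0 := fun h0 => hb (by linear_combination 2 * h0)
  simpa [thE, eval_subST, smul_eq_C_mul, halp, hb'] using h _ (hW 0 g hg).1

theorem IsThetaSubmodule.vanishesAt_add_two (hW : IsThetaSubmodule lam alp bet gam W)
    (halp : alp ≠ 0) (h : VanishesAt W a b) (hb : b ≠ 2 * bet) :
    VanishesAt W a (b + 2) := fun g hg => by
  have hb' : 2⁻¹ * b - bet ≠ 0 := fun h0 => hb (by linear_combination 2 * h0)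
  simpa [thF, eval_subST, smul_eq_C_mul, halp, hb'] using h _ (hW 0 g hg).2.1

theorem IsThetaSubmodule.eq_bot_of_ne_top (hW : IsThetaSubmodule lam alp bet gam W)
    (hlam : lam ≠ 0) (halp : alp ≠ 0) (hbet : ¬∃ n : ℕ, 2 * bet = n) (hW' : W ≠ ⊤) : W = ⊥ := by
  obtain ⟨x, hx⟩ :=
    exists_forall_eval_eq_zero_of_forall_X_mul_mem W (fun j _ => hW.X_mul_mem j) hW'
  have hx' : VanishesAt W (x 0) (x 1) := by
    rwa [VanishesAt, show ![x 0, x 1] = x from FinVec.etaExpand_eq x]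
  obtain ⟨d, hd, hrows⟩ : ∃ d : ℂ, d ≠ 0 ∧ ∀ k : ℕ, VanishesAt W (x 0) (x 1 + d * k) := by
    rcases forall_add_two_mul_ne_or_forall_add_neg_two_mul_ne hbet (x 1) with hc | hc
    · exact ⟨2, two_ne_zero,
        add_mul_natCast_induction hx' (fun _ hy => hW.vanishesAt_add_two halp hy) hc⟩
    · exact ⟨-2, by norm_num,
        add_mul_natCast_induction hx' (fun _ hy => hW.vanishesAt_add_neg_two halp hy) hc⟩
  refine (Submodule.eq_bot_iff W).mpr fun g hg =>
    eq_zero_of_eval_eq_zero_on_grid (a := x 0) (b := x 1) hd fun i k hk => ?_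
  exact hW.vanishesAt_sub_intCast hlam (hrows k) hk i g hg

end Irreducible

section Reducible

open Finset

noncomputable def halfTAdd (z : ℂ) : P2 := C (1/2 : ℂ) * X 1 + C z

theorem eval_halfTAdd (x : Fin 2 → ℂ) (z : ℂ) : eval x (halfTAdd z) = x 1 / 2 + z := by
  simp only [halfTAdd, map_add, map_mul, eval_C, eval_X]; ring

theorem subST_halfTAdd (i : ℤ) (c z : ℂ) : subST i c (halfTAdd z) = halfTAdd (c / 2 + z) :=
  MvPolynomial.funext fun x => by
    simp only [eval_subST, eval_halfTAdd, Matrix.cons_val_one, Matrix.cons_val_fin_one]; ring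

noncomputable def singularPoly (n : ℕ) (bet : ℂ) : P2 :=
  ∏ j ∈ range (n + 1), halfTAdd (j - bet)

variable {n : ℕ} {bet : ℂ}

theorem subST_singularPoly (i : ℤ) (c : ℂ) :
    subST i c (singularPoly n bet) = ∏ j ∈ range (n + 1), halfTAdd (c / 2 + (j - bet)) := by
  simp only [singularPoly, map_prod, subST_halfTAdd]

theorem subST_zero_singularPoly (i : ℤ) : subST i 0 (singularPoly n bet) = singularPoly n bet := by
  rw [subST_singularPoly]; simp [singularPoly]

theorem halfTAdd_mul_subST_neg_two_singularPoly (hn : 2 * bet = n) (i : ℤ) :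
    halfTAdd bet * subST i (-2) (singularPoly n bet) =
      halfTAdd (-1 - bet) * singularPoly n bet := by
  set F : ℕ → P2 := fun j => halfTAdd (j - 1 - bet)
  have hsub : subST i (-2) (singularPoly n bet) = ∏ j ∈ range (n + 1), F j :=
    (subST_singularPoly i _).trans (prod_congr rfl fun j _ => by simp only [F]; ring_nf)
  have hq : singularPoly n bet = ∏ j ∈ range (n + 1), F (j + 1) :=
    prod_congr rfl fun j _ => by simp [F]
  have hlast : F (n + 1) = halfTAdd bet := by
    simp only [F]; congr 1; push_cast; linear_combination -hn
  rw [hsub, hq, ← hlast, mul_comm, ← prod_range_succ, prod_range_succ', mul_comm]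
  simp [F]

theorem halfTAdd_mul_subST_two_singularPoly (i : ℤ) :
    halfTAdd (-bet) * subST i 2 (singularPoly n bet) =
      halfTAdd (n + 1 - bet) * singularPoly n bet := by
  set F : ℕ → P2 := fun j => halfTAdd (j - bet)
  have hsub : subST i 2 (singularPoly n bet) = ∏ j ∈ range (n + 1), F (j + 1) :=
    (subST_singularPoly i _).trans (prod_congr rfl fun j _ => by simp only [F]; push_cast; ring_nf)
  rw [hsub, singularPoly, mul_comm, show halfTAdd (-bet) = F 0 by simp [F], ← prod_range_succ',
    prod_range_succ, mul_comm]
  simp [F]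

theorem isThetaSubmodule_span_singularPoly (lam alp gam : ℂ) (hn : 2 * bet = n) :
    IsThetaSubmodule lam alp bet gam ((Ideal.span {singularPoly n bet}).restrictScalars ℂ) := by
  intro i g hg
  have hF : C (1/2 : ℂ) * X 1 - C bet = halfTAdd (-bet) := by
    simp [halfTAdd, sub_eq_add_neg]
  refine ⟨?_, ?_, ?_, ?_⟩
  · exact Ideal.smul_mul_map_mem_span_singleton _ _
      (halfTAdd_mul_subST_neg_two_singularPoly hn i) hg
  · rw [Submodule.restrictScalars_mem, thF, hF]
    exact Ideal.smul_mul_map_mem_span_singleton _ _ (halfTAdd_mul_subST_two_singularPoly i) hg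
  · exact Ideal.smul_mul_map_mem_span_singleton _ _
      (congrArg (X 1 * ·) (subST_zero_singularPoly i)) hg
  · exact Ideal.smul_mul_map_mem_span_singleton _ _
      (congrArg ((X 0 + C ((i : ℂ) * gam)) * ·) (subST_zero_singularPoly i)) hg

theorem halfTAdd_ne_zero (z : ℂ) : halfTAdd z ≠ 0 := by
  have h1 : eval ![0, 2 - 2 * z] (halfTAdd z) = 1 := by 
    rw [eval_halfTAdd, Matrix.cons_val_one, Matrix.cons_val_fin_one]; ring
  exact fun h => one_ne_zero (h1.symm.trans (by rw [h, map_zero]))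

theorem singularPoly_ne_zero : singularPoly n bet ≠ 0 :=
  prod_ne_zero_iff.mpr fun _ _ => halfTAdd_ne_zero _

theorem not_isUnit_singularPoly : ¬IsUnit (singularPoly n bet) := fun h => by
  refine (h.map (eval ![0, 2 * bet])).ne_zero ?_
  rw [singularPoly, map_prod]
  exact prod_eq_zero (mem_range.mpr n.succ_pos) (by simp [eval_halfTAdd])

end Reducible

/-- The module `Θ(λ,α,β,γ)` over the affine-Virasoro algebra of type `A₁` is irreducible if
and only if `2β ∉ ℤ≥0`. -/
theorem stmt11 (lam alp : ℂ) (hlam : lam ≠ 0) (halp : alp ≠ 0) (bet gam : ℂ) :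
    (∀ W : Submodule ℂ P2,
        (∀ (i : ℤ), ∀ g ∈ W, thE lam alp bet i g ∈ W ∧ thF lam alp bet i g ∈ W ∧
          thH lam i g ∈ W ∧ thD lam gam i g ∈ W) →
        W = ⊥ ∨ W = ⊤) ↔
      ¬ ∃ n : ℕ, 2 * bet = (n : ℂ) := by
  constructor
  · rintro hirr ⟨n, hn⟩
    rcases hirr _ (isThetaSubmodule_span_singularPoly lam alp gam hn) with h | h
    · exact singularPoly_ne_zero
        (Ideal.span_singleton_eq_bot.mp ((Submodule.restrictScalars_eq_bot_iff _ _ _).mp h))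
    · exact not_isUnit_singularPoly
        (Ideal.span_singleton_eq_top.mp ((Submodule.restrictScalars_eq_top_iff _ _ _).mp h))
  · exact fun hbet W hW =>
      or_iff_not_imp_right.mpr (IsThetaSubmodule.eq_bot_of_ne_top hW hlam halp hbet)
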